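/- arXiv:1512.02376 — 2 statements merged into one kernel-verified Lean document; each statement's English description precedes it below -/
import Mathlib

section
/- Let in(𝒢_{D_{2m}}) denote the set consisting of the first-written monomial of each binomial of 𝒢_{D_{2m}} (namely the monomials x_{i,k}x_{j,ℓ}, x_{i,ℓ}x_{j,k} for i<j<k<ℓ in J; x_{i,j}x_{i,k}, x_j x_{i,k}, x_k x_{i,j}, x_{j,k}y_i, x_{i,k}y_j for i<j<k in J; x_i x_j, x_j y_i, x_{i,j}y_i, x_{i,j}x_1 x_n for i<j in J; and x_i x_1 x_n for i in J). If M and M′ are monomials of R such that no monomial of in(𝒢_{D_{2m}}) divides M and no monomial of in(𝒢_{D_{2m}}) divides M′, then π(M) = π(M′) implies M = M′. -/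
open MvPolynomial

/-- Index type for the variables of the polynomial ring `R` in the `D_{2m}` case (`n = 2m`).
The set `J = {3,5,…,n-1}` of odd integers is realised as `{2t+3 | t : Fin (m-1)}` and
`J^c = {2,4,…,n-2}` as `{2t+2 | t : Fin (m-1)}`.  The constructors are:
`x1 ↦ x_1`, `xn ↦ x_n`, `xJ t ↦ x_{2t+3}` (`2t+3 ∈ J`), `xJc t ↦ x_{2t+2}` (`2t+2 ∈ J^c`),
`xP s t _ ↦ x_{2s+3,2t+3}` (a pair `k < ℓ` in `J`), `y t ↦ y_{2t+3}`. -/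
inductive DVar (m : ℕ) : Type where
  | x1 : DVar m
  | xn : DVar m
  | xJ : Fin (m - 1) → DVar m
  | xJc : Fin (m - 1) → DVar m
  | xP : (s t : Fin (m - 1)) → s < t → DVar m
  | y : Fin (m - 1) → DVar m

/-- The images of the variables under `π`, where `u_i = X i` inside
`K[u_1,…,u_n] ⊆ MvPolynomial ℕ K`:
`π(x_1) = u_1²`, `π(x_n) = u_n²` (`n = 2m`), `π(x_i) = u_i²` for `i ∈ J`,
`π(x_j) = u_j` for `j ∈ J^c`, `π(x_{k,ℓ}) = u_k u_ℓ` for `k < ℓ` in `J`, and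
`π(y_i) = u_i u_1 u_n` for `i ∈ J`. -/
noncomputable def dImage (K : Type*) [Field K] (m : ℕ) : DVar m → MvPolynomial ℕ K
  | .x1 => X 1 ^ 2
  | .xn => X (2 * m) ^ 2
  | .xJ t => X (2 * t.val + 3) ^ 2
  | .xJc t => X (2 * t.val + 2)
  | .xP s t _ => X (2 * s.val + 3) * X (2 * t.val + 3)
  | .y t => X (2 * t.val + 3) * X 1 * X (2 * m)

/-- The toric map `π : R → K[u_1,…,u_n]` for the `D_{2m}` configuration. -/
noncomputable def piD (K : Type*) [Field K] (m : ℕ) :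
    MvPolynomial (DVar m) K →ₐ[K] MvPolynomial ℕ K :=
  aeval (dImage K m)

/-- The set `𝒢_{D_{2m}}` of binomials. -/
noncomputable def GD (K : Type*) [Field K] (m : ℕ) : Set (MvPolynomial (DVar m) K) :=
  {g | (∃ (i j k l : Fin (m - 1)) (hij : i < j) (hjk : j < k) (hkl : k < l),
          g = X (DVar.xP i k (hij.trans hjk)) * X (DVar.xP j l (hjk.trans hkl))
              - X (DVar.xP i j hij) * X (DVar.xP k l hkl) ∨
          g = X (DVar.xP i l (hij.trans (hjk.trans hkl))) * X (DVar.xP j k hjk)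
              - X (DVar.xP i j hij) * X (DVar.xP k l hkl)) ∨
      (∃ (i j k : Fin (m - 1)) (hij : i < j) (hjk : j < k),
          g = X (DVar.xP i j hij) * X (DVar.xP i k (hij.trans hjk))
              - X (DVar.xJ i) * X (DVar.xP j k hjk) ∨
          g = X (DVar.xJ j) * X (DVar.xP i k (hij.trans hjk))
              - X (DVar.xP i j hij) * X (DVar.xP j k hjk) ∨
          g = X (DVar.xJ k) * X (DVar.xP i j hij)
              - X (DVar.xP i k (hij.trans hjk)) * X (DVar.xP j k hjk) ∨
          g = X (DVar.xP j k hjk) * X (DVar.y i)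
              - X (DVar.xP i j hij) * X (DVar.y k) ∨
          g = X (DVar.xP i k (hij.trans hjk)) * X (DVar.y j)
              - X (DVar.xP i j hij) * X (DVar.y k)) ∨
      (∃ (i j : Fin (m - 1)) (hij : i < j),
          g = X (DVar.xJ i) * X (DVar.xJ j) - X (DVar.xP i j hij) ^ 2 ∨
          g = X (DVar.xJ j) * X (DVar.y i) - X (DVar.xP i j hij) * X (DVar.y j) ∨
          g = X (DVar.xP i j hij) * X (DVar.y i) - X (DVar.xJ i) * X (DVar.y j) ∨
          g = X (DVar.xP i j hij) * X DVar.x1 * X DVar.xn - X (DVar.y i) * X (DVar.y j)) ∨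
      (∃ i : Fin (m - 1),
          g = X (DVar.xJ i) * X DVar.x1 * X DVar.xn - X (DVar.y i) ^ 2)}

/-- The set `in(𝒢_{D_{2m}})` of the first-written monomials of the binomials of `𝒢_{D_{2m}}`. -/
noncomputable def inGD (K : Type*) [Field K] (m : ℕ) : Set (MvPolynomial (DVar m) K) :=
  {g | (∃ (i j k l : Fin (m - 1)) (hij : i < j) (hjk : j < k) (hkl : k < l),
          g = X (DVar.xP i k (hij.trans hjk)) * X (DVar.xP j l (hjk.trans hkl)) ∨
          g = X (DVar.xP i l (hij.trans (hjk.trans hkl))) * X (DVar.xP j k hjk)) ∨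
      (∃ (i j k : Fin (m - 1)) (hij : i < j) (hjk : j < k),
          g = X (DVar.xP i j hij) * X (DVar.xP i k (hij.trans hjk)) ∨
          g = X (DVar.xJ j) * X (DVar.xP i k (hij.trans hjk)) ∨
          g = X (DVar.xJ k) * X (DVar.xP i j hij) ∨
          g = X (DVar.xP j k hjk) * X (DVar.y i) ∨
          g = X (DVar.xP i k (hij.trans hjk)) * X (DVar.y j)) ∨
      (∃ (i j : Fin (m - 1)) (hij : i < j),
          g = X (DVar.xJ i) * X (DVar.xJ j) ∨
          g = X (DVar.xJ j) * X (DVar.y i) ∨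
          g = X (DVar.xP i j hij) * X (DVar.y i) ∨
          g = X (DVar.xP i j hij) * X DVar.x1 * X DVar.xn) ∨
      (∃ i : Fin (m - 1),
          g = X (DVar.xJ i) * X DVar.x1 * X DVar.xn)}

open Finset

/-!
Record a monomial by its exponents: `α`, `β` of `x_1`, `x_n`; `A t` of `x_t` and `Q s t` of
`x_{s,t}` (`s, t ∈ J`), read as a multigraph on `J` with `A t` loops at `t`; `G t` of `y_t`; and
those of the `x_j`, `j ∈ J^c`. Then `π` records `2α + ∑ G`, `2β + ∑ G`, the exponents of the
`x_j`, and for `t ∈ J` the degree of `t` in the multigraph plus `G t`.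

For a standard monomial, `α, β > 0` forces the multigraph to be empty, so `∑ G` is the least
of the three totals `2α + ∑ G`, `2β + ∑ G`, `∑_t (deg t + G t)`; and the `y_t` sit on the largest
indices, so `G` is read off greedily from the top. The multigraph is then rebuilt from its
degree sequence: at the largest vertex `T` of positive degree, either there are loops at `T` and
every edge ends at `T`, or the edges into `T` start at a block of consecutive vertices just
below `T`. Either way the edges into `T` are an explicit function of the degrees; deleting them
and the loops at `T` gives a smaller standard multigraph.
-/

section Divisibility

variable {R σ : Type*} [CommSemiring R] {d : σ →₀ ℕ}

lemma X_mul_X_dvd_monomial {a b : σ} (hab : a ≠ b) (ha : 0 < d a) (hb : 0 < d b) :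
    (X a * X b : MvPolynomial σ R) ∣ monomial d 1 := by
  classical
  rw [X, X, monomial_mul, one_mul, monomial_dvd_monomial]
  refine ⟨Or.inr fun i => ?_, dvd_rfl⟩
  simp only [Finsupp.add_apply, Finsupp.single_apply]
  split_ifs <;> subst_vars <;> simp_all <;> omega

lemma X_mul_X_mul_X_dvd_monomial {a b c : σ} (hab : a ≠ b) (hac : a ≠ c) (hbc : b ≠ c)
    (ha : 0 < d a) (hb : 0 < d b) (hc : 0 < d c) :
    (X a * X b * X c : MvPolynomial σ R) ∣ monomial d 1 := by
  classical
  rw [X, X, X, monomial_mul, monomial_mul, one_mul, one_mul, monomial_dvd_monomial]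
  refine ⟨Or.inr fun i => ?_, dvd_rfl⟩
  simp only [Finsupp.add_apply, Finsupp.single_apply]
  split_ifs <;> subst_vars <;> simp_all <;> omega

end Divisibility

section Multigraph

variable {ι : Type*} {A A' : ι → ℕ} {Q Q' : ι → ι → ℕ}

section Degree

variable [Fintype ι]

def multigraphDegree (A : ι → ℕ) (Q : ι → ι → ℕ) (t : ι) : ℕ :=
  2 * A t + ∑ s, (Q s t + Q t s)

lemma le_multigraphDegree_left (s t : ι) : Q s t ≤ multigraphDegree A Q s := by
  have := single_le_sum (f := fun u => Q u s + Q s u) (fun _ _ => Nat.zero_le _) (mem_univ t)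
  simp only [multigraphDegree] at this ⊢
  omega

lemma le_multigraphDegree_right (s t : ι) : Q s t ≤ multigraphDegree A Q t := by
  have := single_le_sum (f := fun u => Q u t + Q t u) (fun _ _ => Nat.zero_le _) (mem_univ s)
  simp only [multigraphDegree] at this ⊢
  omega

lemma multigraphDegree_add (A₁ A₂ : ι → ℕ) (Q₁ Q₂ : ι → ι → ℕ) :
    multigraphDegree (A₁ + A₂) (Q₁ + Q₂) = multigraphDegree A₁ Q₁ + multigraphDegree A₂ Q₂ := by
  ext t
  simp only [multigraphDegree, Pi.add_apply, sum_add_distrib]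
  ring

lemma multigraphDegree_eq_of_isolated {u T : ι} (hA : A u = 0) (hin : ∀ s, Q s u = 0)
    (hout : ∀ v, v ≠ T → Q u v = 0) : multigraphDegree A Q u = Q u T := by
  simp only [multigraphDegree, hA, hin, zero_add, mul_zero]
  exact sum_eq_single T (fun v _ hv => hout v hv) (fun h => absurd (mem_univ T) h)

lemma eq_zero_of_multigraphDegree_eq_zero (h : ∀ t, multigraphDegree A Q t = 0) :
    A = 0 ∧ Q = 0 := by
  refine ⟨funext fun t => ?_, funext₂ fun s t => ?_⟩
  · have := h t
    simp only [multigraphDegree] at this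
    simp only [Pi.zero_apply]
    omega
  · have := (le_multigraphDegree_right (A := A) s t).trans (h t).le
    simp only [Pi.zero_apply]
    omega

variable [DecidableEq ι]

def eraseLoopsAt (T : ι) (A : ι → ℕ) (t : ι) : ℕ := if t = T then 0 else A t

def eraseEdgesTo (T : ι) (Q : ι → ι → ℕ) (u v : ι) : ℕ := if v = T then 0 else Q u v

lemma multigraphDegree_erase_eq (T : ι) (hA : A T = A' T) (hQ : ∀ u, Q u T = Q' u T)
    (hdeg : multigraphDegree A Q = multigraphDegree A' Q') :
    multigraphDegree (eraseLoopsAt T A) (eraseEdgesTo T Q) =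
      multigraphDegree (eraseLoopsAt T A') (eraseEdgesTo T Q') := by
  have hsplit (A : ι → ℕ) (Q : ι → ι → ℕ) : multigraphDegree A Q =
      multigraphDegree (eraseLoopsAt T A) (eraseEdgesTo T Q) +
        multigraphDegree (fun t => if t = T then A t else 0)
          (fun u v => if v = T then Q u v else 0) := by
    rw [← multigraphDegree_add]
    congr <;> ext <;> simp only [Pi.add_apply, eraseLoopsAt, eraseEdgesTo] <;> split_ifs <;> simp
  have hstar : multigraphDegree (fun t => if t = T then A t else 0)
        (fun u v => if v = T then Q u v else 0) =
      multigraphDegree (fun t => if t = T then A' t else 0)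
        (fun u v => if v = T then Q' u v else 0) := by
    congr 1 <;> ext <;> split_ifs with hT <;> simp only [hT, hA, hQ]
  rw [hsplit A Q, hsplit A' Q', hstar] at hdeg
  exact add_right_cancel hdeg

end Degree

variable [LinearOrder ι]

/-- The exponents `A t` of `x_t` and `Q s t` of `x_{s,t}` in a monomial that no initial monomial
of `𝒢_{D_{2m}}` in these variables alone divides. -/
structure IsStandardPairing (A : ι → ℕ) (Q : ι → ι → ℕ) : Prop where
  lt_of_pos : ∀ {s t}, 0 < Q s t → s < t
  loop_unique : ∀ {s t}, 0 < A s → 0 < A t → s = t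
  le_or_eq_of_loop : ∀ {r s t}, 0 < A r → 0 < Q s t → r ≤ s ∨ t = r
  right_unique : ∀ {s t t'}, 0 < Q s t → 0 < Q s t' → t = t'
  le_or_eq_of_lt : ∀ {s t u v}, s < u → 0 < Q s t → 0 < Q u v → t ≤ u ∨ t = v

namespace IsStandardPairing

lemma mono (h : IsStandardPairing A Q) (hA : A' ≤ A) (hQ : Q' ≤ Q) :
    IsStandardPairing A' Q' where
  lt_of_pos hst := h.lt_of_pos (hst.trans_le (hQ _ _))
  loop_unique hs ht := h.loop_unique (hs.trans_le (hA _)) (ht.trans_le (hA _))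
  le_or_eq_of_loop hr hst := h.le_or_eq_of_loop (hr.trans_le (hA _)) (hst.trans_le (hQ _ _))
  right_unique ht ht' := h.right_unique (ht.trans_le (hQ _ _)) (ht'.trans_le (hQ _ _))
  le_or_eq_of_lt hsu ht hv := h.le_or_eq_of_lt hsu (ht.trans_le (hQ _ _)) (hv.trans_le (hQ _ _))

lemma erase (h : IsStandardPairing A Q) (T : ι) :
    IsStandardPairing (eraseLoopsAt T A) (eraseEdgesTo T Q) :=
  h.mono (fun t => by unfold eraseLoopsAt; split_ifs <;> simp)
    (fun u v => by unfold eraseEdgesTo; split_ifs <;> simp)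

lemma eq_zero_of_not_lt (h : IsStandardPairing A Q) {s t : ι} (hst : ¬ s < t) : Q s t = 0 := by
  by_contra hne
  exact hst (h.lt_of_pos (Nat.pos_of_ne_zero hne))

variable [Fintype ι]

lemma multigraphDegree_eq_of_mem_Ioo (h : IsStandardPairing A Q) {θ s T : ι} (hθ : 0 < Q θ T)
    (hθs : θ < s) (hsT : s < T) : multigraphDegree A Q s = Q s T := by
  apply multigraphDegree_eq_of_isolated
  · by_contra hA
    rcases h.le_or_eq_of_loop (Nat.pos_of_ne_zero hA) hθ with h1 | h1
    exacts [hθs.not_ge h1, hsT.ne' h1]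
  · intro u
    by_contra hu
    have hu := Nat.pos_of_ne_zero hu
    have hus := h.lt_of_pos hu
    rcases lt_trichotomy u θ with huθ | rfl | hθu
    · rcases h.le_or_eq_of_lt huθ hu hθ with h1 | h1
      exacts [hθs.not_ge h1, hsT.ne h1]
    · exact hsT.ne (h.right_unique hu hθ)
    · rcases h.le_or_eq_of_lt hθu hθ hu with h1 | h1
      exacts [(hus.trans hsT).not_ge h1, hsT.ne' h1]
  · intro v hv
    by_contra hsv
    rcases h.le_or_eq_of_lt hθs hθ (Nat.pos_of_ne_zero hsv) with h1 | h1
    exacts [hsT.not_ge h1, hv h1.symm]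

section Top

variable {T : ι}

lemma top_row_eq_zero (h : IsStandardPairing A Q)
    (hT : ∀ t, 0 < multigraphDegree A Q t → t ≤ T) (t : ι) : Q T t = 0 := by
  by_contra hne
  have hpos := Nat.pos_of_ne_zero hne
  exact (h.lt_of_pos hpos).not_ge (hT t (hpos.trans_le (le_multigraphDegree_right T t)))

lemma multigraphDegree_top (h : IsStandardPairing A Q)
    (hT : ∀ t, 0 < multigraphDegree A Q t → t ≤ T) :
    multigraphDegree A Q T = 2 * A T + ∑ u, Q u T := by
  simp only [multigraphDegree, h.top_row_eq_zero hT, add_zero]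

lemma sum_multigraphDegree_erase_lt (h : IsStandardPairing A Q)
    (hT : ∀ t, 0 < multigraphDegree A Q t → t ≤ T) (hTpos : 0 < multigraphDegree A Q T) :
    ∑ t, multigraphDegree (eraseLoopsAt T A) (eraseEdgesTo T Q) t <
      ∑ t, multigraphDegree A Q t := by
  refine sum_lt_sum (fun t _ => ?_) ⟨T, mem_univ T, ?_⟩
  · simp only [multigraphDegree, eraseLoopsAt, eraseEdgesTo]
    gcongr with s <;> split_ifs <;> simp
  · have hzero : multigraphDegree (eraseLoopsAt T A) (eraseEdgesTo T Q) T = 0 := by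
      simp [multigraphDegree, eraseLoopsAt, eraseEdgesTo, h.top_row_eq_zero hT]
    omega

/-- A loop at the top vertex forces every edge to end there. -/
lemma multigraphDegree_eq_of_loop_top (h : IsStandardPairing A Q)
    (hT : ∀ t, 0 < multigraphDegree A Q t → t ≤ T) (hA : 0 < A T) {u : ι} (hu : u ≠ T) :
    multigraphDegree A Q u = Q u T := by
  have hout : ∀ {s t}, 0 < Q s t → t = T := by
    intro s t hst
    refine (h.le_or_eq_of_loop hA hst).resolve_left fun hTs => ?_
    have hlt := hTs.trans_lt (h.lt_of_pos hst)
    exact hlt.not_ge (hT t (hst.trans_le (le_multigraphDegree_right s t)))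
  apply multigraphDegree_eq_of_isolated
  · by_contra hAu
    exact hu (h.loop_unique (Nat.pos_of_ne_zero hAu) hA)
  · intro s
    by_contra hsu
    exact hu (hout (Nat.pos_of_ne_zero hsu))
  · intro v hv
    by_contra huv
    exact hv (hout (Nat.pos_of_ne_zero huv))

variable [LocallyFiniteOrder ι]

lemma column_top_of_loop (h : IsStandardPairing A Q)
    (hT : ∀ t, 0 < multigraphDegree A Q t → t ≤ T) (hA : 0 < A T) {u : ι} (hu : u < T) :
    Q u T = min (multigraphDegree A Q u)
      (multigraphDegree A Q T - ∑ s ∈ Ioo u T, multigraphDegree A Q s) := by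
  have htop := h.multigraphDegree_top hT
  have hcol (s : ι) (hs : s < T) : multigraphDegree A Q s = Q s T :=
    h.multigraphDegree_eq_of_loop_top hT hA hs.ne
  have hle : ∑ s ∈ Ico u T, Q s T ≤ ∑ s, Q s T := sum_le_sum_of_subset (subset_univ _)
  have hIco : ∑ s ∈ Ico u T, multigraphDegree A Q s = ∑ s ∈ Ico u T, Q s T :=
    sum_congr rfl fun s hs => hcol s (mem_Ico.1 hs).2
  rw [← Ioo_insert_left hu, sum_insert left_notMem_Ioo] at hIco hle
  rw [sum_insert left_notMem_Ioo] at hIco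
  have hu' := hcol u hu
  omega

lemma multigraphDegree_top_eq_of_isLeast (h : IsStandardPairing A Q)
    (hT : ∀ t, 0 < multigraphDegree A Q t → t ≤ T) (hA : A T = 0) {θ : ι}
    (hθ : IsLeast {v | 0 < Q v T} θ) :
    multigraphDegree A Q T = Q θ T + ∑ s ∈ Ioo θ T, multigraphDegree A Q s := by
  have hsupp : ∑ s ∈ insert θ (Ioo θ T), Q s T = ∑ s, Q s T := by
    refine sum_subset (subset_univ _) fun w _ hw => ?_
    by_contra hne
    have hpos := Nat.pos_of_ne_zero hne
    exact hw (mem_insert.2 ((hθ.2 hpos).eq_or_lt.imp Eq.symm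
      fun hθw => mem_Ioo.2 ⟨hθw, h.lt_of_pos hpos⟩))
  have hIoo : ∑ s ∈ Ioo θ T, multigraphDegree A Q s = ∑ s ∈ Ioo θ T, Q s T :=
    sum_congr rfl fun s hs => h.multigraphDegree_eq_of_mem_Ioo hθ.1 (mem_Ioo.1 hs).1
      (mem_Ioo.1 hs).2
  rw [sum_insert left_notMem_Ioo] at hsupp
  rw [h.multigraphDegree_top hT, hA, hIoo]
  omega

/-- The edges into `T` fill up the degrees of the vertices below `T`, from the top down. -/
lemma column_top (h : IsStandardPairing A Q) (hT : ∀ t, 0 < multigraphDegree A Q t → t ≤ T)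
    {u : ι} (hu : u < T) :
    Q u T = min (multigraphDegree A Q u)
      (multigraphDegree A Q T - ∑ s ∈ Ioo u T, multigraphDegree A Q s) := by
  rcases Nat.eq_zero_or_pos (A T) with hA | hA
  swap
  · exact h.column_top_of_loop hT hA hu
  by_cases hcol : ∀ v, Q v T = 0
  · simp [h.multigraphDegree_top hT, hcol, hA]
  obtain ⟨v, hv⟩ := not_forall.1 hcol
  obtain ⟨θ, hθmem, hθmin⟩ :=
    (univ.filter fun v => 0 < Q v T).exists_min_image id ⟨v, by simpa using Nat.pos_of_ne_zero hv⟩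
  simp only [mem_filter, mem_univ, true_and, id] at hθmem hθmin
  have hDT := h.multigraphDegree_top_eq_of_isLeast hT hA ⟨hθmem, fun w hw => hθmin w hw⟩
  have hθT := h.lt_of_pos hθmem
  set D := multigraphDegree A Q
  have hθD : Q θ T ≤ D θ := le_multigraphDegree_left θ T
  rcases lt_trichotomy u θ with huθ | rfl | hθu
  · have hQ : Q u T = 0 := by
      by_contra hne
      exact (hθmin u (Nat.pos_of_ne_zero hne)).not_gt huθ
    have hle : ∑ s ∈ insert θ (Ioo θ T), D s ≤ ∑ s ∈ Ioo u T, D s :=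
      sum_le_sum_of_subset (insert_subset (mem_Ioo.2 ⟨huθ, hθT⟩) (Ioo_subset_Ioo_left huθ.le))
    rw [sum_insert left_notMem_Ioo] at hle
    omega
  · omega
  · have hDu : D u = Q u T := h.multigraphDegree_eq_of_mem_Ioo hθmem hθu hu
    have hle : ∑ s ∈ insert u (Ioo u T), D s ≤ ∑ s ∈ Ioo θ T, D s :=
      sum_le_sum_of_subset (insert_subset (mem_Ioo.2 ⟨hθu, hu⟩) (Ioo_subset_Ioo_left hθu.le))
    rw [sum_insert left_notMem_Ioo] at hle
    omega

lemma eq_at_top_of_multigraphDegree_eq (h : IsStandardPairing A Q) (h' : IsStandardPairing A' Q')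
    (hdeg : multigraphDegree A Q = multigraphDegree A' Q')
    (hT : ∀ t, 0 < multigraphDegree A Q t → t ≤ T) : A T = A' T ∧ ∀ u, Q u T = Q' u T := by
  have hT' : ∀ t, 0 < multigraphDegree A' Q' t → t ≤ T := hdeg ▸ hT
  have hcol (u : ι) : Q u T = Q' u T := by
    rcases lt_or_ge u T with hu | hu
    · rw [h.column_top hT hu, h'.column_top hT' hu, hdeg]
    · rw [h.eq_zero_of_not_lt hu.not_gt, h'.eq_zero_of_not_lt hu.not_gt]
  have htop := h.multigraphDegree_top hT
  have htop' := h'.multigraphDegree_top hT'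
  have hsum : ∑ u, Q u T = ∑ u, Q' u T := sum_congr rfl fun u _ => hcol u
  rw [hdeg] at htop
  exact ⟨by omega, hcol⟩

end Top

variable [LocallyFiniteOrder ι]

theorem eq_of_multigraphDegree_eq (h : IsStandardPairing A Q) (h' : IsStandardPairing A' Q')
    (hdeg : multigraphDegree A Q = multigraphDegree A' Q') : A = A' ∧ Q = Q' := by
  induction hn : ∑ t, multigraphDegree A Q t using Nat.strong_induction_on
    generalizing A A' Q Q' with
  | _ n ih =>
  by_cases hzero : ∀ t, multigraphDegree A Q t = 0
  · obtain ⟨rfl, rfl⟩ := eq_zero_of_multigraphDegree_eq_zero hzero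
    obtain ⟨rfl, rfl⟩ := eq_zero_of_multigraphDegree_eq_zero (hdeg ▸ hzero)
    exact ⟨rfl, rfl⟩
  obtain ⟨t₀, ht₀⟩ := not_forall.1 hzero
  obtain ⟨T, hTpos, hT⟩ := (univ.filter fun t => 0 < multigraphDegree A Q t).exists_max_image id
    ⟨t₀, by simpa using Nat.pos_of_ne_zero ht₀⟩
  simp only [mem_filter, mem_univ, true_and, id] at hTpos hT
  obtain ⟨hAT, hcol⟩ := h.eq_at_top_of_multigraphDegree_eq h' hdeg hT
  obtain ⟨hA, hQ⟩ := ih _ (hn ▸ h.sum_multigraphDegree_erase_lt hT hTpos) (h.erase T)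
    (h'.erase T) (multigraphDegree_erase_eq T hAT hcol hdeg) rfl
  refine ⟨funext fun t => ?_, funext₂ fun u v => ?_⟩
  · by_cases ht : t = T
    · rw [ht, hAT]
    · simpa [eraseLoopsAt, ht] using congrFun hA t
  · by_cases hv : v = T
    · rw [hv, hcol]
    · simpa [eraseEdgesTo, hv] using congrFun₂ hQ u v

end IsStandardPairing

/-- The exponent pattern of a monomial avoiding `in(𝒢_{D_{2m}})`: `α`, `β`, `A t`, `G t`, `Q s t`
are the exponents of `x_1`, `x_n`, `x_t`, `y_t`, `x_{s,t}`. -/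
structure IsStandard (α β : ℕ) (A G : ι → ℕ) (Q : ι → ι → ℕ) : Prop
    extends IsStandardPairing A Q where
  le_of_y_of_edge : ∀ {i s t}, 0 < G i → 0 < Q s t → t ≤ i
  le_of_y_of_loop : ∀ {i t}, 0 < G i → 0 < A t → t ≤ i
  loop_eq_zero : 0 < α → 0 < β → ∀ t, A t = 0
  edge_eq_zero : 0 < α → 0 < β → ∀ s t, Q s t = 0

namespace IsStandard

variable [Fintype ι] {α β α' β' : ℕ} {G G' : ι → ℕ}

lemma sum_y_eq_min (h : IsStandard α β A G Q) :
    ∑ t, G t = min (2 * α + ∑ t, G t)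
      (min (2 * β + ∑ t, G t) (∑ t, (multigraphDegree A Q t + G t))) := by
  rw [sum_add_distrib]
  by_cases hα : α = 0
  · simp [hα]
  by_cases hβ : β = 0
  · simp [hβ]
  have hdeg (t : ι) : multigraphDegree A Q t = 0 := by
    simp [multigraphDegree, h.loop_eq_zero (Nat.pos_of_ne_zero hα) (Nat.pos_of_ne_zero hβ),
      h.edge_eq_zero (Nat.pos_of_ne_zero hα) (Nat.pos_of_ne_zero hβ)]
  simp [hdeg]

/-- The `y_t` sit on the largest indices, so on an upper set they take as much of the degree
as they can. -/
lemma sum_y_eq_min_of_isUpperSet (h : IsStandard α β A G Q) {S : Finset ι}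
    (hS : IsUpperSet (S : Set ι)) :
    ∑ s ∈ S, G s = min (∑ t, G t) (∑ s ∈ S, (multigraphDegree A Q s + G s)) := by
  by_cases hout : ∀ i ∉ S, G i = 0
  · have hSG : ∑ s ∈ S, G s = ∑ t, G t := sum_subset (subset_univ S) fun i _ hi => hout i hi
    have hle : ∑ s ∈ S, G s ≤ ∑ s ∈ S, (multigraphDegree A Q s + G s) :=
      sum_le_sum fun s _ => Nat.le_add_left _ _
    omega
  obtain ⟨i, hiS, hi⟩ := not_forall₂.1 hout
  have hi := Nat.pos_of_ne_zero hi
  have hlt {s : ι} (hs : s ∈ S) : i < s := lt_of_not_ge fun hsi => hiS (hS hsi hs)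
  have hdeg {s : ι} (hs : s ∈ S) : multigraphDegree A Q s = 0 := by
    have hA : A s = 0 := by
      by_contra hA
      exact (hlt hs).not_ge (h.le_of_y_of_loop hi (Nat.pos_of_ne_zero hA))
    have hin (u : ι) : Q u s = 0 := by
      by_contra hQ
      exact (hlt hs).not_ge (h.le_of_y_of_edge hi (Nat.pos_of_ne_zero hQ))
    have hout (u : ι) : Q s u = 0 := by
      by_contra hQ
      have hQ := Nat.pos_of_ne_zero hQ
      exact ((hlt hs).trans (h.lt_of_pos hQ)).not_ge (h.le_of_y_of_edge hi hQ)
    exact (multigraphDegree_eq_of_isolated hA hin fun v _ => hout v).trans (hout s)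
  have hSG : ∑ s ∈ S, (multigraphDegree A Q s + G s) = ∑ s ∈ S, G s :=
    sum_congr rfl fun s hs => by rw [hdeg hs, zero_add]
  have hle : ∑ s ∈ S, G s ≤ ∑ t, G t := sum_le_sum_of_subset (subset_univ S)
  omega

lemma y_eq_of_sum_y_eq (h : IsStandard α β A G Q) (h' : IsStandard α' β' A' G' Q')
    (hy : ∑ t, G t = ∑ t, G' t)
    (hw : ∀ t, multigraphDegree A Q t + G t = multigraphDegree A' Q' t + G' t) : G = G' := by
  have hsum {S : Finset ι} (hS : IsUpperSet (S : Set ι)) : ∑ s ∈ S, G s = ∑ s ∈ S, G' s := by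
    rw [h.sum_y_eq_min_of_isUpperSet hS, h'.sum_y_eq_min_of_isUpperSet hS, hy,
      sum_congr rfl fun s _ => hw s]
  funext t
  have hle := hsum (S := univ.filter (t ≤ ·)) fun a b hab ha => by
    simp only [coe_filter, mem_univ, true_and] at ha ⊢
    exact ha.trans hab
  have hlt := hsum (S := univ.filter (t < ·)) fun a b hab ha => by
    simp only [coe_filter, mem_univ, true_and] at ha ⊢
    exact ha.trans_le hab
  have hins : univ.filter (t ≤ ·) = insert t (univ.filter (t < ·)) := by
    ext u
    simp [le_iff_eq_or_lt, eq_comm]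
  rw [hins, sum_insert (by simp), sum_insert (by simp), hlt] at hle
  omega

variable [LocallyFiniteOrder ι]

theorem eq_of_weights_eq (h : IsStandard α β A G Q) (h' : IsStandard α' β' A' G' Q')
    (h1 : 2 * α + ∑ t, G t = 2 * α' + ∑ t, G' t) (hn : 2 * β + ∑ t, G t = 2 * β' + ∑ t, G' t)
    (hw : ∀ t, multigraphDegree A Q t + G t = multigraphDegree A' Q' t + G' t) :
    α = α' ∧ β = β' ∧ A = A' ∧ G = G' ∧ Q = Q' := by
  have hy : ∑ t, G t = ∑ t, G' t := by
    rw [h.sum_y_eq_min, h'.sum_y_eq_min, h1, hn, sum_congr rfl fun t _ => hw t]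
  have hG := h.y_eq_of_sum_y_eq h' hy hw
  have hdeg : multigraphDegree A Q = multigraphDegree A' Q' := funext fun t => by
    have := hw t
    rw [hG] at this
    omega
  obtain ⟨hA, hQ⟩ := h.eq_of_multigraphDegree_eq h'.toIsStandardPairing hdeg
  exact ⟨by omega, by omega, hA, hG, hQ⟩

end IsStandard

end Multigraph

namespace DVar

variable {m : ℕ}

def equivSum (m : ℕ) :
    Unit ⊕ Unit ⊕ Fin (m - 1) ⊕ Fin (m - 1) ⊕ {p : Fin (m - 1) × Fin (m - 1) // p.1 < p.2} ⊕
      Fin (m - 1) ≃ DVar m where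
  toFun
    | .inl _ => x1
    | .inr (.inl _) => xn
    | .inr (.inr (.inl t)) => xJ t
    | .inr (.inr (.inr (.inl t))) => xJc t
    | .inr (.inr (.inr (.inr (.inl p)))) => xP p.1.1 p.1.2 p.2
    | .inr (.inr (.inr (.inr (.inr t)))) => y t
  invFun
    | x1 => .inl ()
    | xn => .inr (.inl ())
    | xJ t => .inr (.inr (.inl t))
    | xJc t => .inr (.inr (.inr (.inl t)))
    | xP s t h => .inr (.inr (.inr (.inr (.inl ⟨(s, t), h⟩))))
    | y t => .inr (.inr (.inr (.inr (.inr t))))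
  left_inv x := by rcases x with _ | _ | _ | _ | _ | _ <;> rfl
  right_inv v := by cases v <;> rfl

noncomputable instance : Fintype (DVar m) := Fintype.ofEquiv _ (equivSum m)

lemma sum_univ_eq {M : Type*} [AddCommMonoid M] (f : DVar m → M) :
    ∑ v, f v = f x1 + f xn + ∑ t, f (xJ t) + ∑ t, f (xJc t)
      + ∑ s, ∑ t, (if h : s < t then f (xP s t h) else 0) + ∑ t, f (y t) := by
  rw [← (equivSum m).sum_comp]
  simp only [Fintype.sum_sum_type, Fintype.sum_unique, add_assoc]
  congr 5
  rw [← Fintype.sum_prod_type', Finset.sum_dite]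
  simp only [Finset.sum_const_zero, add_zero]
  exact Finset.sum_equiv (Equiv.subtypeEquivRight (by simp)) (by simp) fun _ _ => rfl

noncomputable def weight : DVar m → ℕ →₀ ℕ
  | x1 => .single 1 2
  | xn => .single (2 * m) 2
  | xJ t => .single (2 * t + 3) 2
  | xJc t => .single (2 * t + 2) 1
  | xP s t _ => .single (2 * s + 3) 1 + .single (2 * t + 3) 1
  | y t => .single (2 * t + 3) 1 + .single 1 1 + .single (2 * m) 1

lemma dImage_eq_monomial (K : Type*) [Field K] (v : DVar m) :
    dImage K m v = monomial (weight v) 1 := by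
  cases v <;> simp [dImage, weight, X, monomial_pow, monomial_mul]

noncomputable def imageExponent (d : DVar m →₀ ℕ) : ℕ →₀ ℕ := ∑ v, d v • weight v

def pairExp (d : DVar m →₀ ℕ) (s t : Fin (m - 1)) : ℕ :=
  if h : s < t then d (xP s t h) else 0

lemma exists_of_pairExp_pos {d : DVar m →₀ ℕ} {s t : Fin (m - 1)} (hst : 0 < pairExp d s t) :
    ∃ h : s < t, 0 < d (xP s t h) := by
  unfold pairExp at hst
  split_ifs at hst with h
  exacts [⟨h, hst⟩, (lt_irrefl 0 hst).elim]

lemma imageExponent_apply (d : DVar m →₀ ℕ) (k : ℕ) :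
    imageExponent d k = ∑ v, d v * weight v k := by
  simp [imageExponent, Finsupp.finsetSum_apply]

lemma imageExponent_apply_one (d : DVar m →₀ ℕ) :
    imageExponent d 1 = 2 * d x1 + ∑ t, d (y t) := by
  rw [imageExponent_apply, sum_univ_eq]
  simp (disch := omega) [weight, mul_comm]

lemma imageExponent_apply_two_mul (d : DVar m →₀ ℕ) :
    imageExponent d (2 * m) = 2 * d xn + ∑ t, d (y t) := by
  rw [imageExponent_apply, sum_univ_eq]
  simp (disch := omega) [weight, mul_comm]

lemma imageExponent_apply_even (d : DVar m →₀ ℕ) (t : Fin (m - 1)) :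
    imageExponent d (2 * t + 2) = d (xJc t) := by
  rw [imageExponent_apply, sum_univ_eq]
  have := t.isLt
  simp (disch := omega) [weight, Finsupp.single_apply, Fin.val_inj]

lemma imageExponent_apply_odd (d : DVar m →₀ ℕ) (t : Fin (m - 1)) :
    imageExponent d (2 * t + 3) =
      multigraphDegree (fun t => d (xJ t)) (pairExp d) t + d (y t) := by
  rw [imageExponent_apply, sum_univ_eq]
  have := t.isLt
  have hpair (s u : Fin (m - 1)) :
      (if h : s < u then d (xP s u h) * ((if s = t then 1 else 0) + if u = t then 1 else 0) else 0)
        = (if s = t then pairExp d s u else 0) + (if u = t then pairExp d s u else 0) := by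
    unfold pairExp
    split_ifs <;> ring
  simp (disch := omega) [weight, Finsupp.single_apply, Fin.val_inj, multigraphDegree, hpair,
    sum_add_distrib]
  ring

end DVar

open DVar

lemma piD_monomial (K : Type*) [Field K] {m : ℕ} (d : DVar m →₀ ℕ) :
    piD K m (monomial d 1) = monomial (imageExponent d) 1 := by
  rw [piD, aeval_monomial, map_one, one_mul, Finsupp.prod_fintype _ _ fun _ => pow_zero _,
    imageExponent, monomial_sum_one]
  exact Finset.prod_congr rfl fun v _ => by rw [dImage_eq_monomial, monomial_pow, one_pow]

lemma isStandardPairing_of_not_dvd {K : Type*} [Field K] {m : ℕ} {d : DVar m →₀ ℕ}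
    (hd : ∀ g ∈ inGD K m, ¬ g ∣ monomial d 1) :
    IsStandardPairing (fun t => d (xJ t)) (pairExp d) := by
  have h2 {a b : DVar m} (hg : X a * X b ∈ inGD K m) (hab : a ≠ b) (ha : 0 < d a)
      (hb : 0 < d b) : False :=
    hd _ hg (X_mul_X_dvd_monomial hab ha hb)
  refine
    { lt_of_pos := fun hst => (exists_of_pairExp_pos hst).1
      loop_unique := fun {s t} hs ht => ?_
      le_or_eq_of_loop := fun {r s t} hr hst => ?_
      right_unique := fun {s t t'} ht ht' => ?_
      le_or_eq_of_lt := fun {s t u v} hsu ht hv => ?_ }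
  · by_contra hne
    rcases lt_or_gt_of_ne hne with hst | hts
    · exact h2 (Or.inr (Or.inr (Or.inl ⟨s, t, hst, Or.inl rfl⟩))) (by simp [hst.ne]) hs ht
    · exact h2 (Or.inr (Or.inr (Or.inl ⟨t, s, hts, Or.inl rfl⟩))) (by simp [hts.ne]) ht hs
  · obtain ⟨hst, hq⟩ := exists_of_pairExp_pos hst
    by_contra hc
    rw [not_or, not_le] at hc
    rcases lt_or_gt_of_ne hc.2 with htr | hrt
    · exact h2 (Or.inr (Or.inl ⟨s, t, r, hst, htr, Or.inr (Or.inr (Or.inl rfl))⟩)) (by simp)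
        hr hq
    · exact h2 (Or.inr (Or.inl ⟨s, r, t, hc.1, hrt, Or.inr (Or.inl rfl)⟩)) (by simp) hr hq
  · obtain ⟨hst, hq⟩ := exists_of_pairExp_pos ht
    obtain ⟨hst', hq'⟩ := exists_of_pairExp_pos ht'
    by_contra hne
    rcases lt_or_gt_of_ne hne with htt | htt
    · exact h2 (Or.inr (Or.inl ⟨s, t, t', hst, htt, Or.inl rfl⟩)) (by simp [htt.ne]) hq hq'
    · exact h2 (Or.inr (Or.inl ⟨s, t', t, hst', htt, Or.inl rfl⟩)) (by simp [htt.ne]) hq' hq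
  · obtain ⟨hst, hq⟩ := exists_of_pairExp_pos ht
    obtain ⟨huv, hq'⟩ := exists_of_pairExp_pos hv
    by_contra hc
    rw [not_or, not_le] at hc
    rcases lt_or_gt_of_ne hc.2 with htv | hvt
    · exact h2 (Or.inl ⟨s, u, t, v, hsu, hc.1, htv, Or.inl rfl⟩) (by simp [hsu.ne]) hq hq'
    · exact h2 (Or.inl ⟨s, u, v, t, hsu, huv, hvt, Or.inr rfl⟩) (by simp [hsu.ne]) hq hq'

lemma isStandard_of_not_dvd {K : Type*} [Field K] {m : ℕ} {d : DVar m →₀ ℕ}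
    (hd : ∀ g ∈ inGD K m, ¬ g ∣ monomial d 1) :
    IsStandard (d x1) (d xn) (fun t => d (xJ t)) (fun t => d (y t)) (pairExp d) := by
  have h2 {a b : DVar m} (hg : X a * X b ∈ inGD K m) (hab : a ≠ b) (ha : 0 < d a)
      (hb : 0 < d b) : False :=
    hd _ hg (X_mul_X_dvd_monomial hab ha hb)
  refine
    { toIsStandardPairing := isStandardPairing_of_not_dvd hd
      le_of_y_of_edge := fun {i s t} hi hst => ?_
      le_of_y_of_loop := fun {i t} hi ht => ?_
      loop_eq_zero := fun h1 hn t => ?_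
      edge_eq_zero := fun h1 hn s t => ?_ }
  · obtain ⟨hst, hq⟩ := exists_of_pairExp_pos hst
    by_contra hc
    rw [not_le] at hc
    rcases lt_trichotomy s i with hsi | rfl | his
    · exact h2 (Or.inr (Or.inl ⟨s, i, t, hsi, hc, Or.inr (Or.inr (Or.inr (Or.inr rfl)))⟩))
        (by simp) hq hi
    · exact h2 (Or.inr (Or.inr (Or.inl ⟨s, t, hst, Or.inr (Or.inr (Or.inl rfl))⟩))) (by simp)
        hq hi
    · exact h2 (Or.inr (Or.inl ⟨i, s, t, his, hst, Or.inr (Or.inr (Or.inr (Or.inl rfl)))⟩))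
        (by simp) hq hi
  · by_contra hc
    rw [not_le] at hc
    exact h2 (Or.inr (Or.inr (Or.inl ⟨i, t, hc, Or.inr (Or.inl rfl)⟩))) (by simp) ht hi
  · by_contra ht
    exact hd _ (Or.inr (Or.inr (Or.inr ⟨t, rfl⟩)))
      (X_mul_X_mul_X_dvd_monomial (by simp) (by simp) (by simp) (Nat.pos_of_ne_zero ht) h1 hn)
  · by_contra hst
    obtain ⟨hst, hq⟩ := exists_of_pairExp_pos (Nat.pos_of_ne_zero hst)
    exact hd _ (Or.inr (Or.inr (Or.inl ⟨s, t, hst, Or.inr (Or.inr (Or.inr rfl))⟩)))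
      (X_mul_X_mul_X_dvd_monomial (by simp) (by simp) (by simp) hq h1 hn)

theorem piD_inj_on_standard_monomials_general (K : Type*) [Field K] (m : ℕ)
    (M M' : MvPolynomial (DVar m) K)
    (hM : ∃ d : DVar m →₀ ℕ, M = monomial d (1 : K))
    (hM' : ∃ d : DVar m →₀ ℕ, M' = monomial d (1 : K))
    (hMdvd : ∀ g ∈ inGD K m, ¬ g ∣ M)
    (hM'dvd : ∀ g ∈ inGD K m, ¬ g ∣ M')
    (heq : piD K m M = piD K m M') :
    M = M' := by
  obtain ⟨d, rfl⟩ := hM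
  obtain ⟨d', rfl⟩ := hM'
  rw [piD_monomial, piD_monomial] at heq
  have hw := monomial_left_injective one_ne_zero heq
  obtain ⟨hx1, hxn, hxJ, hy, hxP⟩ :=
    (isStandard_of_not_dvd hMdvd).eq_of_weights_eq (isStandard_of_not_dvd hM'dvd)
      (by simpa only [imageExponent_apply_one] using congr($hw 1))
      (by simpa only [imageExponent_apply_two_mul] using congr($hw (2 * m)))
      (fun t => by simpa only [imageExponent_apply_odd] using congr($hw (2 * t + 3)))
  suffices d = d' by rw [this]
  ext v
  cases v with
  | x1 => exact hx1
  | xn => exact hxn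
  | xJ t => exact congrFun hxJ t
  | xJc t => simpa only [imageExponent_apply_even] using congr($hw (2 * t + 2))
  | xP s t h => simpa [pairExp, h] using congrFun₂ hxP s t
  | y t => exact congrFun hy t

/-- if `M` and `M′` are monomials of `R` such that no monomial of
`in(𝒢_{D_{2m}})` divides `M` and no monomial of `in(𝒢_{D_{2m}})` divides `M′`,
then `π(M) = π(M′)` implies `M = M′`. -/
theorem piD_inj_on_standard_monomials (K : Type*) [Field K] (m : ℕ) (hm : 2 ≤ m)
    (M M' : MvPolynomial (DVar m) K)
    (hM : ∃ d : DVar m →₀ ℕ, M = monomial d (1 : K))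
    (hM' : ∃ d : DVar m →₀ ℕ, M' = monomial d (1 : K))
    (hMdvd : ∀ g ∈ inGD K m, ¬ g ∣ M)
    (hM'dvd : ∀ g ∈ inGD K m, ¬ g ∣ M')
    (heq : piD K m M = piD K m M') :
    M = M' :=
  piD_inj_on_standard_monomials_general K m M M' hM hM' hMdvd hM'dvd heq
end

section
/- The set 𝒢_{D_{2m}} is a minimal generating set of the toric ideal I_{D_{2m}}: the ideal generated by 𝒢_{D_{2m}} equals I_{D_{2m}}, and no proper subset of 𝒢_{D_{2m}} generates I_{D_{2m}}. -/
open MvPolynomial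

/-!
Since `π` is a monomial map, its kernel is spanned by the binomials `x^a - x^b` with
`π(x^a) = π(x^b)`, so generation amounts to showing that two exponents with the same
multidegree are linked by the moves `x^A ↔ x^B` of the binomials of `𝒢_{D_{2m}}`, multiplied
by monomials. The moves `y_i y_j ↔ x_{ij} x_1 x_n` leave at most one `y`. After that, any
variable of `x^a` can be made to appear in `x^b` by a single move, either
`x_{ab} x_{cd} ↔ x_{ac} x_{bd}` or `x_{ab} y_c ↔ x_{cb} y_a` (with `x_{aa} = x_a`), where it
cancels, and induction on the degree finishes. For minimality, no monomial of another
binomial of `𝒢_{D_{2m}}` divides the leading monomial `x^A` of a binomial `x^A - x^B`, so the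
coefficient of `x^A` vanishes on the ideal generated by the others.
-/

namespace MvPolynomial

variable {σ τ R : Type*} [CommRing R]

lemma aeval_monomial_monomial (e : σ → τ →₀ ℕ) (a : σ →₀ ℕ) (r : R) :
    aeval (fun v => monomial (e v) (1 : R)) (monomial a r) =
      monomial (Finsupp.linearCombination ℕ e a) r := by
  simp only [aeval_monomial, Finsupp.prod, monomial_pow, one_pow, ← monomial_sum_one,
    Finsupp.linearCombination_apply, Finsupp.sum, algebraMap_eq, C_mul_monomial, mul_one]

def binomialCon (I : Ideal (MvPolynomial σ R)) : AddCon (σ →₀ ℕ) where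
  r a b := monomial a (1 : R) - monomial b 1 ∈ I
  iseqv :=
    ⟨fun _ => by simp, fun h => by simpa using I.neg_mem h,
      fun h h' => by simpa using I.add_mem h h'⟩
  add' {a b c d} h h' := by
    convert I.add_mem (I.mul_mem_left (monomial c 1) h) (I.mul_mem_left (monomial b 1) h')
      using 1
    simp only [mul_sub, monomial_mul, mul_one, add_comm c]
    abel

/-- The quotient map by `I` factors through the monomial map. -/
lemma ker_aeval_monomial_le (e : σ → τ →₀ ℕ) {I : Ideal (MvPolynomial σ R)}
    (hI : ∀ a b, Finsupp.linearCombination ℕ e a = Finsupp.linearCombination ℕ e b →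
      monomial a (1 : R) - monomial b 1 ∈ I) :
    RingHom.ker (aeval fun v => monomial (e v) (1 : R)) ≤ I := by
  classical
  set E := Finsupp.linearCombination ℕ e
  let mk := (Ideal.Quotient.mkₐ R I).toLinearMap
  let φ : MvPolynomial τ R →ₗ[R] MvPolynomial σ R ⧸ I := (basisMonomials τ R).constr R
    fun w => if h : ∃ a, E a = w then mk (monomial h.choose 1) else 0
  have hφ : φ ∘ₗ (aeval fun v => monomial (e v) (1 : R)).toLinearMap = mk := by
    refine (basisMonomials σ R).ext fun a => ?_
    have h : ∃ a', E a' = E a := ⟨a, rfl⟩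
    simp only [LinearMap.comp_apply, AlgHom.toLinearMap_apply, coe_basisMonomials,
      aeval_monomial_monomial]
    rw [show monomial (E a) (1 : R) = basisMonomials τ R (E a) by simp,
      Module.Basis.constr_basis, dif_pos h]
    exact Ideal.Quotient.eq.2 (hI _ _ h.choose_spec)
  intro f hf
  rw [← Ideal.Quotient.eq_zero_iff_mem]
  have := congr($hφ f)
  simp only [LinearMap.comp_apply, AlgHom.toLinearMap_apply, RingHom.mem_ker.1 hf,
    map_zero] at this
  exact this.symm

lemma coeff_eq_zero_of_mem_span {S : Set (MvPolynomial σ R)} {A : σ →₀ ℕ}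
    (hS : ∀ s ∈ S, ∀ e ∈ s.support, ¬ e ≤ A) {f : MvPolynomial σ R} (hf : f ∈ Ideal.span S) :
    ∀ e ≤ A, coeff e f = 0 := by
  classical
  induction hf using Submodule.span_induction with
  | mem s hs => exact fun e he => notMem_support_iff.1 fun hes => hS s hs e hes he
  | zero => simp
  | add f g _ _ hf hg => intro e he; simp [hf e he, hg e he]
  | smul p f _ hf =>
    intro e he
    rw [smul_eq_mul, coeff_mul]
    refine Finset.sum_eq_zero fun x hx => ?_
    have hx2 : x.2 ≤ e := le_add_self.trans_eq (Finset.HasAntidiagonal.mem_antidiagonal.1 hx)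
    rw [hf x.2 (hx2.trans he), mul_zero]

end MvPolynomial

namespace Finsupp

variable {σ τ : Type*}

lemma single_one_add_tsub {a : σ →₀ ℕ} {v : σ} (h : a v ≠ 0) :
    single v 1 + (a - single v 1) = a :=
  add_tsub_cancel_of_le (single_le_iff.2 (Nat.one_le_iff_ne_zero.2 h))

lemma single_add_single_le {b : σ →₀ ℕ} {u v : σ} (huv : u ≠ v) (hu : b u ≠ 0)
    (hv : b v ≠ 0) : single u 1 + single v 1 ≤ b := by
  classical
  intro w
  by_cases hwu : w = u
  · subst hwu; simp [Ne.symm huv]; omega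
  · by_cases hwv : w = v
    · subst hwv; simp [huv]; omega
    · simp [Ne.symm hwu, Ne.symm hwv]

lemma eq_of_le_of_degree_le {e A : σ →₀ ℕ} (h : e ≤ A) (hd : A.degree ≤ e.degree) :
    e = A := by
  have hA : e + (A - e) = A := add_tsub_cancel_of_le h
  have h0 : (A - e).degree = 0 := by
    have := congrArg degree hA
    rw [map_add] at this
    omega
  rw [← hA, (degree_eq_zero_iff _).1 h0, add_zero]

lemma exists_of_linearCombination_apply_pos (e : σ → τ →₀ ℕ) {b : σ →₀ ℕ} {p : τ}
    (h : 0 < linearCombination ℕ e b p) : ∃ w, b w ≠ 0 ∧ 0 < e w p := by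
  rw [linearCombination_apply, sum_apply] at h
  obtain ⟨w, hw, hne⟩ := Finset.exists_ne_zero_of_sum_ne_zero h.ne'
  simp only [coe_smul, Pi.smul_apply, smul_eq_mul, ne_eq, mul_eq_zero, not_or] at hne
  exact ⟨w, hne.1, Nat.pos_of_ne_zero hne.2⟩

lemma exists_of_single_add_single_le_linearCombination (e : σ → τ →₀ ℕ)
    {b : σ →₀ ℕ} {p q : τ} (h : single p 1 + single q 1 ≤ linearCombination ℕ e b) :
    (∃ w, b w ≠ 0 ∧ single p 1 + single q 1 ≤ e w) ∨
      ∃ w₁ w₂, single w₁ 1 + single w₂ 1 ≤ b ∧ 0 < e w₁ p ∧ 0 < e w₂ q := by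
  classical
  obtain ⟨w₁, hb₁, hp₁⟩ := exists_of_linearCombination_apply_pos e
    (lt_of_lt_of_le (by simp) (le_def.1 h p))
  by_cases hw : single p 1 + single q 1 ≤ e w₁
  · exact Or.inl ⟨w₁, hb₁, hw⟩
  right
  have hb := single_one_add_tsub hb₁
  have hq : 0 < linearCombination ℕ e (b - single w₁ 1) q := by
    refine Nat.pos_of_ne_zero fun h0 => hw (le_def.2 fun z => ?_)
    have hz := le_def.1 h z
    rw [← hb, map_add, linearCombination_single, one_smul] at hz
    by_cases hzq : z = q
    · subst hzq; simpa [h0] using hz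
    · by_cases hzp : z = p
      · subst hzp; simp [Ne.symm hzq]; omega
      · simp [Ne.symm hzq, Ne.symm hzp]
  obtain ⟨w₂, hb₂, hq₂⟩ := exists_of_linearCombination_apply_pos e hq
  refine ⟨w₁, w₂, ?_, hp₁, hq₂⟩
  rw [← hb]
  exact add_le_add le_rfl (single_le_iff.2 (Nat.one_le_iff_ne_zero.2 hb₂))

end Finsupp

lemma AddCon.rel_add_tsub_of_le {σ : Type*} (c : AddCon (σ →₀ ℕ)) {A B b : σ →₀ ℕ}
    (hle : A ≤ b) (h : c A B) : c b (B + (b - A)) := by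
  simpa only [add_tsub_cancel_of_le hle] using c.add h (c.refl (b - A))

noncomputable section

namespace DVar

open Finsupp

open scoped Classical

variable {m : ℕ}

/-- `pair s t` is `x_{k,ℓ}` for `{k, ℓ} = {2s+3, 2t+3}`, read as `x_k` when `s = t`. -/
def pair (s t : Fin (m - 1)) : DVar m :=
  if h : s < t then xP s t h else if h' : t < s then xP t s h' else xJ s

lemma pair_of_lt {s t : Fin (m - 1)} (h : s < t) : pair s t = xP s t h := by
  simp [pair, h]

lemma pair_self (s : Fin (m - 1)) : pair s s = xJ s := by
  simp [pair]

lemma pair_comm (s t : Fin (m - 1)) : pair s t = pair t s := by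
  rcases lt_trichotomy s t with h | rfl | h
  · simp [pair, h, h.not_gt]
  · rfl
  · simp [pair, h, h.not_gt]

lemma pair_of_gt {s t : Fin (m - 1)} (h : t < s) : pair s t = xP t s h := by
  rw [pair_comm, pair_of_lt]

def exponent : DVar m → ℕ →₀ ℕ
  | x1 => single 1 2
  | xn => single (2 * m) 2
  | xJ t => single (2 * t.val + 3) 2
  | xJc t => single (2 * t.val + 2) 1
  | xP s t _ => single (2 * s.val + 3) 1 + single (2 * t.val + 3) 1
  | y t => single (2 * t.val + 3) 1 + single 1 1 + single (2 * m) 1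

lemma exponent_pair (s t : Fin (m - 1)) :
    exponent (pair s t) = single (2 * s.val + 3) 1 + single (2 * t.val + 3) 1 := by
  rcases lt_trichotomy s t with h | rfl | h
  · rw [pair_of_lt h, exponent]
  · rw [pair_self, exponent, ← single_add]
  · rw [pair_of_gt h, exponent, add_comm]

lemma exponent_ne_zero (v : DVar m) : exponent v ≠ 0 := by
  cases v <;> simp [exponent]

lemma piD_eq_aeval (K : Type*) [Field K] :
    piD K m = aeval fun v => monomial (exponent v) 1 := by
  rw [piD]
  congr 1
  funext v
  cases v <;> simp only [dImage, exponent, X_pow_eq_monomial] <;>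
    simp only [X, monomial_mul, mul_one]

def mdeg : (DVar m →₀ ℕ) →ₗ[ℕ] ℕ →₀ ℕ := linearCombination ℕ exponent

lemma piD_monomial (K : Type*) [Field K] (a : DVar m →₀ ℕ) :
    piD K m (monomial a 1) = monomial (mdeg a) 1 := by
  rw [piD_eq_aeval, aeval_monomial_monomial, mdeg]

lemma mdeg_single (v : DVar m) (n : ℕ) : mdeg (single v n) = n • exponent v :=
  linearCombination_single _ _ _

lemma exponent_le_mdeg {a : DVar m →₀ ℕ} {v : DVar m} (h : a v ≠ 0) : exponent v ≤ mdeg a := by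
  rw [← single_one_add_tsub h, map_add, mdeg_single, one_smul]
  exact le_self_add

lemma eq_zero_of_mdeg_eq_zero {a : DVar m →₀ ℕ} (h : mdeg a = 0) : a = 0 := by
  ext v
  by_contra hv
  have hle := exponent_le_mdeg hv
  rw [h] at hle
  exact exponent_ne_zero v (nonpos_iff_eq_zero.1 hle)

def ycount (a : DVar m →₀ ℕ) : ℕ := ∑ t, a (y t)

lemma ycount_add (a b : DVar m →₀ ℕ) : ycount (a + b) = ycount a + ycount b := by
  simp [ycount, Finset.sum_add_distrib]

lemma ycount_single_y (t : Fin (m - 1)) (n : ℕ) : ycount (single (y t) n) = n := by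
  simp [ycount, single_apply]

lemma ycount_single_of_ne {v : DVar m} (hv : ∀ t, v ≠ y t) (n : ℕ) :
    ycount (single v n) = 0 := by
  simp [ycount, hv]

lemma apply_y_le_ycount (a : DVar m →₀ ℕ) (t : Fin (m - 1)) : a (y t) ≤ ycount a :=
  Finset.single_le_sum (f := fun t => a (y t)) (fun _ _ => Nat.zero_le _) (Finset.mem_univ t)

lemma exists_apply_y_ne_zero {a : DVar m →₀ ℕ} (h : ycount a ≠ 0) : ∃ t, a (y t) ≠ 0 := by
  obtain ⟨t, -, ht⟩ := Finset.exists_ne_zero_of_sum_ne_zero h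
  exact ⟨t, ht⟩

lemma mdeg_apply_one (a : DVar m →₀ ℕ) : mdeg a 1 = 2 * a x1 + ycount a := by
  induction a using induction_linear with
  | zero => simp [ycount]
  | add f g hf hg =>
    rw [LinearMap.map_add, Finsupp.add_apply, hf, hg, ycount_add, Finsupp.add_apply]
    ring
  | single v n =>
    cases v <;> simp [mdeg_single, exponent, ycount_single_y, ycount_single_of_ne]
    omega

lemma mdeg_apply_two_mul (a : DVar m →₀ ℕ) : mdeg a (2 * m) = 2 * a xn + ycount a := by
  induction a using induction_linear with
  | zero => simp [ycount]
  | add f g hf hg =>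
    rw [LinearMap.map_add, Finsupp.add_apply, hf, hg, ycount_add, Finsupp.add_apply]
    ring
  | single v n =>
    cases v <;> simp [mdeg_single, exponent, ycount_single_y, ycount_single_of_ne, single_apply] <;>
      omega

lemma mdeg_apply_even (a : DVar m →₀ ℕ) (t : Fin (m - 1)) :
    mdeg a (2 * t.val + 2) = a (xJc t) := by
  induction a using induction_linear with
  | zero => simp
  | add f g hf hg =>
    rw [LinearMap.map_add, Finsupp.add_apply, hf, hg, Finsupp.add_apply]
  | single v n =>
    cases v <;> simp [mdeg_single, exponent, single_apply, Fin.val_inj] <;> omega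

lemma eq_y_or_eq_pair_of_exponent_ne_zero {i : Fin (m - 1)} {w : DVar m}
    (h : exponent w (2 * i.val + 3) ≠ 0) : w = y i ∨ ∃ o, w = pair i o := by
  cases w with
  | xJ s =>
    simp [exponent, single_apply, Fin.val_inj] at h
    exact Or.inr ⟨i, by rw [h, pair_self]⟩
  | xP s t hst =>
    by_cases hs : s = i
    · subst hs
      exact Or.inr ⟨t, (pair_of_lt hst).symm⟩
    · simp [exponent, single_apply, Fin.val_inj, hs] at h
      subst h
      exact Or.inr ⟨s, (pair_of_gt hst).symm⟩
  | y s =>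
    by_cases hs : s = i
    · exact Or.inl (hs ▸ rfl)
    · simp [exponent, single_apply, Fin.val_inj, hs] at h
      omega
  | _ => simp [exponent, single_apply] at h <;> omega

lemma eq_pair_of_exponent_pair_le {i k : Fin (m - 1)} {w : DVar m}
    (h : exponent (pair i k) ≤ exponent w) : w = pair i k := by
  have hi := le_def.1 h (2 * i.val + 3)
  have hk := le_def.1 h (2 * k.val + 3)
  have hw : exponent w (2 * i.val + 3) ≠ 0 := by
    rw [exponent_pair, Finsupp.add_apply, single_eq_same] at hi
    omega
  rcases eq_y_or_eq_pair_of_exponent_ne_zero hw with rfl | ⟨o, rfl⟩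
  · rw [exponent_pair] at hi hk
    simp [exponent, single_apply, Fin.val_inj] at hi hk
    split_ifs at hi hk <;> omega
  · rw [exponent_pair, exponent_pair] at hk
    simp [single_apply, Fin.val_inj] at hk
    obtain rfl : o = k := by_contra fun hok => by simp [hok] at hk
    rfl

/-- `IsGen A B` says that `x^A - x^B` is one of the binomials of `𝒢_{D_{2m}}`, `x^A` being
the monomial written first there. -/
inductive IsGen : (DVar m →₀ ℕ) → (DVar m →₀ ℕ) → Prop
  | xP_xP_cross {i j k l : Fin (m - 1)} (hij : i < j) (hjk : j < k) (hkl : k < l) :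
      IsGen (single (xP i k (hij.trans hjk)) 1 + single (xP j l (hjk.trans hkl)) 1)
        (single (xP i j hij) 1 + single (xP k l hkl) 1)
  | xP_xP_nest {i j k l : Fin (m - 1)} (hij : i < j) (hjk : j < k) (hkl : k < l) :
      IsGen (single (xP i l (hij.trans (hjk.trans hkl))) 1 + single (xP j k hjk) 1)
        (single (xP i j hij) 1 + single (xP k l hkl) 1)
  | xP_xP_share {i j k : Fin (m - 1)} (hij : i < j) (hjk : j < k) :
      IsGen (single (xP i j hij) 1 + single (xP i k (hij.trans hjk)) 1)
        (single (xJ i) 1 + single (xP j k hjk) 1)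
  | xJ_xP_mid {i j k : Fin (m - 1)} (hij : i < j) (hjk : j < k) :
      IsGen (single (xJ j) 1 + single (xP i k (hij.trans hjk)) 1)
        (single (xP i j hij) 1 + single (xP j k hjk) 1)
  | xJ_xP_last {i j k : Fin (m - 1)} (hij : i < j) (hjk : j < k) :
      IsGen (single (xJ k) 1 + single (xP i j hij) 1)
        (single (xP i k (hij.trans hjk)) 1 + single (xP j k hjk) 1)
  | xP_y_first {i j k : Fin (m - 1)} (hij : i < j) (hjk : j < k) :
      IsGen (single (xP j k hjk) 1 + single (y i) 1) (single (xP i j hij) 1 + single (y k) 1)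
  | xP_y_mid {i j k : Fin (m - 1)} (hij : i < j) (hjk : j < k) :
      IsGen (single (xP i k (hij.trans hjk)) 1 + single (y j) 1)
        (single (xP i j hij) 1 + single (y k) 1)
  | xJ_xJ {i j : Fin (m - 1)} (hij : i < j) :
      IsGen (single (xJ i) 1 + single (xJ j) 1) (single (xP i j hij) 1 + single (xP i j hij) 1)
  | xJ_y {i j : Fin (m - 1)} (hij : i < j) :
      IsGen (single (xJ j) 1 + single (y i) 1) (single (xP i j hij) 1 + single (y j) 1)
  | xP_y {i j : Fin (m - 1)} (hij : i < j) :
      IsGen (single (xP i j hij) 1 + single (y i) 1) (single (xJ i) 1 + single (y j) 1)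
  | xP_x1_xn {i j : Fin (m - 1)} (hij : i < j) :
      IsGen (single (xP i j hij) 1 + single x1 1 + single xn 1) (single (y i) 1 + single (y j) 1)
  | xJ_x1_xn (i : Fin (m - 1)) :
      IsGen (single (xJ i) 1 + single x1 1 + single xn 1) (single (y i) 1 + single (y i) 1)

lemma mem_GD_iff {K : Type*} [Field K] {g : MvPolynomial (DVar m) K} :
    g ∈ GD K m ↔ ∃ A B, IsGen A B ∧ g = monomial A 1 - monomial B 1 := by
  constructor
  · rintro (⟨i, j, k, l, hij, hjk, hkl, rfl | rfl⟩ |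
      ⟨i, j, k, hij, hjk, rfl | rfl | rfl | rfl | rfl⟩ |
      ⟨i, j, hij, rfl | rfl | rfl | rfl⟩ | ⟨i, rfl⟩) <;>
      simp only [X, monomial_mul, mul_one, sq]
    exacts [⟨_, _, .xP_xP_cross hij hjk hkl, rfl⟩, ⟨_, _, .xP_xP_nest hij hjk hkl, rfl⟩,
      ⟨_, _, .xP_xP_share hij hjk, rfl⟩, ⟨_, _, .xJ_xP_mid hij hjk, rfl⟩,
      ⟨_, _, .xJ_xP_last hij hjk, rfl⟩, ⟨_, _, .xP_y_first hij hjk, rfl⟩,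
      ⟨_, _, .xP_y_mid hij hjk, rfl⟩, ⟨_, _, .xJ_xJ hij, rfl⟩, ⟨_, _, .xJ_y hij, rfl⟩,
      ⟨_, _, .xP_y hij, rfl⟩, ⟨_, _, .xP_x1_xn hij, rfl⟩, ⟨_, _, .xJ_x1_xn i, rfl⟩]
  · rintro ⟨A, B, h, rfl⟩
    rcases h with ⟨hij, hjk, hkl⟩ | ⟨hij, hjk, hkl⟩ | ⟨hij, hjk⟩ | ⟨hij, hjk⟩ | ⟨hij, hjk⟩ |
      ⟨hij, hjk⟩ | ⟨hij, hjk⟩ | hij | hij | hij | hij | i <;>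
      simp only [GD, Set.mem_ofPred_eq, X, monomial_mul, mul_one, sq]
    exacts [Or.inl ⟨_, _, _, _, hij, hjk, hkl, Or.inl rfl⟩,
      Or.inl ⟨_, _, _, _, hij, hjk, hkl, Or.inr rfl⟩,
      Or.inr <| Or.inl ⟨_, _, _, hij, hjk, Or.inl rfl⟩,
      Or.inr <| Or.inl ⟨_, _, _, hij, hjk, Or.inr <| Or.inl rfl⟩,
      Or.inr <| Or.inl ⟨_, _, _, hij, hjk, Or.inr <| Or.inr <| Or.inl rfl⟩,
      Or.inr <| Or.inl ⟨_, _, _, hij, hjk, Or.inr <| Or.inr <| Or.inr <| Or.inl rfl⟩,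
      Or.inr <| Or.inl ⟨_, _, _, hij, hjk, Or.inr <| Or.inr <| Or.inr <| Or.inr rfl⟩,
      Or.inr <| Or.inr <| Or.inl ⟨_, _, hij, Or.inl rfl⟩,
      Or.inr <| Or.inr <| Or.inl ⟨_, _, hij, Or.inr <| Or.inl rfl⟩,
      Or.inr <| Or.inr <| Or.inl ⟨_, _, hij, Or.inr <| Or.inr <| Or.inl rfl⟩,
      Or.inr <| Or.inr <| Or.inl ⟨_, _, hij, Or.inr <| Or.inr <| Or.inr rfl⟩,
      Or.inr <| Or.inr <| Or.inr ⟨i, rfl⟩]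

lemma IsGen.mdeg_eq {A B : DVar m →₀ ℕ} (h : IsGen A B) : mdeg A = mdeg B := by
  have two : ∀ p : ℕ, (single p 2 : ℕ →₀ ℕ) = single p 1 + single p 1 := fun p => by
    rw [← single_add]
  cases h <;> simp only [map_add, mdeg_single, one_smul, exponent, two] <;> abel

def moves (m : ℕ) : AddCon (DVar m →₀ ℕ) := addConGen IsGen

lemma IsGen.moves {A B : DVar m →₀ ℕ} (h : IsGen A B) : moves m A B :=
  AddCon.le_addConGen _ _ h

lemma mdeg_eq_of_moves {a b : DVar m →₀ ℕ} (h : moves m a b) : mdeg a = mdeg b :=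
  (AddCon.addConGen_le (c := AddCon.ker mdeg.toAddMonoidHom)).2 (fun _ _ h => h.mdeg_eq) h

lemma moves_le_binomialCon (K : Type*) [Field K] :
    moves m ≤ binomialCon (Ideal.span (GD K m)) :=
  AddCon.addConGen_le.2 fun A B h => Ideal.subset_span (mem_GD_iff.2 ⟨A, B, h, rfl⟩)

lemma moves_y_y (a b : Fin (m - 1)) :
    moves m (single (y a) 1 + single (y b) 1)
      (single (pair a b) 1 + single x1 1 + single xn 1) := by
  wlog hab : a ≤ b generalizing a b
  · rw [add_comm, pair_comm]
    exact this b a (le_of_not_ge hab)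
  rcases hab.lt_or_eq with hab | rfl
  · rw [pair_of_lt hab]
    exact (IsGen.xP_x1_xn hab).moves.symm
  · rw [pair_self]
    exact (IsGen.xJ_x1_xn a).moves.symm

lemma moves_pair_y (a b c : Fin (m - 1)) :
    moves m (single (pair a b) 1 + single (y c) 1) (single (pair c b) 1 + single (y a) 1) := by
  wlog hac : a < c generalizing a c
  · rcases (not_lt.1 hac).lt_or_eq with hca | rfl
    · exact (this c a hca).symm
    · exact (moves m).refl _
  rcases lt_trichotomy b a with hba | rfl | hab
  · rw [pair_of_gt hba, pair_of_gt (hba.trans hac)]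
    exact (IsGen.xP_y_mid hba hac).moves.symm
  · rw [pair_self, pair_of_gt hac]
    exact (IsGen.xP_y hac).moves.symm
  rcases lt_trichotomy b c with hbc | rfl | hcb
  · rw [pair_of_lt hab, pair_of_gt hbc]
    exact (IsGen.xP_y_first hab hbc).moves.symm
  · rw [pair_of_lt hab, pair_self]
    exact (IsGen.xJ_y hab).moves.symm
  · rw [pair_of_lt hab, pair_of_lt hcb]
    exact (IsGen.xP_y_mid hac hcb).moves.trans (IsGen.xP_y_first hac hcb).moves.symm

/-- The three ways of splitting `a, b, c, d` into two pairs give congruent monomials. Unlike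
`moves_pair_pair`, this is symmetric in `a, b, c, d`, so it suffices to prove it for sorted
indices. -/
def MatchingsCongr (a b c d : Fin (m - 1)) : Prop :=
  moves m (single (pair a b) 1 + single (pair c d) 1)
      (single (pair a c) 1 + single (pair b d) 1) ∧
    moves m (single (pair a b) 1 + single (pair c d) 1)
      (single (pair a d) 1 + single (pair b c) 1)

namespace MatchingsCongr

variable {a b c d : Fin (m - 1)}

lemma swap_ab (h : MatchingsCongr a b c d) : MatchingsCongr b a c d := by
  unfold MatchingsCongr at *
  rw [pair_comm b a, add_comm (single (pair b c) 1), add_comm (single (pair b d) 1)]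
  exact ⟨h.2, h.1⟩

lemma swap_cd (h : MatchingsCongr a b c d) : MatchingsCongr a b d c := by
  unfold MatchingsCongr at *
  rw [pair_comm d c]
  exact ⟨h.2, h.1⟩

lemma swap_bc (h : MatchingsCongr a b c d) : MatchingsCongr a c b d := by
  unfold MatchingsCongr at *
  rw [pair_comm c b]
  exact ⟨h.1.symm, h.1.symm.trans h.2⟩

lemma swap_bd (h : MatchingsCongr a b c d) : MatchingsCongr a d c b := by
  unfold MatchingsCongr at *
  rw [pair_comm c b, pair_comm d b, pair_comm d c]
  exact ⟨h.2.symm.trans h.1, h.2.symm⟩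

lemma swap_pairs (h : MatchingsCongr a b c d) : MatchingsCongr c d a b := by
  unfold MatchingsCongr at *
  rw [pair_comm c a, pair_comm d b, pair_comm c b, pair_comm d a, add_comm (single (pair c d) 1),
    add_comm (single (pair b c) 1)]
  exact h

lemma of_le (hab : a ≤ b) (hbc : b ≤ c) (hcd : c ≤ d) : MatchingsCongr a b c d := by
  unfold MatchingsCongr
  rcases hab.lt_or_eq with hab | rfl <;> rcases hbc.lt_or_eq with hbc | rfl <;>
    rcases hcd.lt_or_eq with hcd | rfl
  · rw [pair_of_lt hab, pair_of_lt hcd, pair_of_lt (hab.trans hbc), pair_of_lt (hbc.trans hcd),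
      pair_of_lt (hab.trans (hbc.trans hcd)), pair_of_lt hbc]
    exact ⟨(IsGen.xP_xP_cross hab hbc hcd).moves.symm,
      (IsGen.xP_xP_nest hab hbc hcd).moves.symm⟩
  · rw [pair_of_lt hab, pair_self, pair_of_lt (hab.trans hbc), pair_of_lt hbc, add_comm]
    have h := (IsGen.xJ_xP_last hab hbc).moves
    exact ⟨h, h⟩
  · rw [pair_of_lt hab, pair_of_lt hcd, pair_of_lt (hab.trans hcd), pair_self,
      add_comm (single (xP a d _) 1)]
    exact ⟨(moves m).refl _, (IsGen.xJ_xP_mid hab hcd).moves.symm⟩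
  · exact ⟨(moves m).refl _, (moves m).refl _⟩
  · rw [pair_self, pair_of_lt hbc, pair_of_lt hcd, pair_of_lt (hbc.trans hcd)]
    have h := (IsGen.xP_xP_share hbc hcd).moves.symm
    exact ⟨h, by rw [add_comm (single (xP a d _) 1)]; exact h⟩
  · rw [pair_self, pair_self, pair_of_lt hbc]
    have h := (IsGen.xJ_xJ hbc).moves
    exact ⟨h, h⟩
  · rw [add_comm (single (pair a d) 1)]
    exact ⟨(moves m).refl _, (moves m).refl _⟩
  · exact ⟨(moves m).refl _, (moves m).refl _⟩

end MatchingsCongr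

lemma matchingsCongr (a b c d : Fin (m - 1)) : MatchingsCongr a b c d := by
  wlog hab : a ≤ b generalizing a b c d
  · exact (this b a c d (le_of_not_ge hab)).swap_ab
  wlog hcd : c ≤ d generalizing a b c d
  · exact (this a b d c hab (le_of_not_ge hcd)).swap_cd
  wlog hac : a ≤ c generalizing a b c d
  · exact (this c d a b hcd hab (le_of_not_ge hac)).swap_pairs
  wlog hbd : b ≤ d generalizing a b c d
  · have hdb := le_of_not_ge hbd
    exact (this a d c b (hac.trans hcd) (hcd.trans hdb) hac hdb).swap_bd
  wlog hbc : b ≤ c generalizing a b c d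
  · have hcb := le_of_not_ge hbc
    exact (this a c b d hac hbd hab hcd hcb).swap_bc
  exact .of_le hab hbc hcd

lemma moves_pair_pair (a b c d : Fin (m - 1)) :
    moves m (single (pair a b) 1 + single (pair c d) 1)
      (single (pair a c) 1 + single (pair b d) 1) :=
  (matchingsCongr a b c d).1

lemma pair_ne_y (s t u : Fin (m - 1)) : pair s t ≠ y u := by
  unfold pair
  split_ifs <;> simp

lemma ycount_mono {a b : DVar m →₀ ℕ} (h : a ≤ b) : ycount a ≤ ycount b :=
  Finset.sum_le_sum fun t _ => h (y t)

lemma exists_moves_ycount_le_one (a : DVar m →₀ ℕ) : ∃ a', moves m a a' ∧ ycount a' ≤ 1 := by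
  induction hn : ycount a using Nat.strong_induction_on generalizing a with
  | _ n ih =>
    by_cases ha : ycount a ≤ 1
    · exact ⟨a, (moves m).refl a, ha⟩
    obtain ⟨s, hs⟩ := exists_apply_y_ne_zero (a := a) (by omega)
    have has := single_one_add_tsub hs
    obtain ⟨t, ht⟩ := exists_apply_y_ne_zero (a := a - single (y s) 1) (by
      rw [← has, ycount_add, ycount_single_y] at ha
      omega)
    have hat := single_one_add_tsub ht
    set r := a - single (y s) 1 - single (y t) 1
    have hr : ycount a = ycount r + 2 := by
      rw [← has, ← hat, ycount_add, ycount_add, ycount_single_y, ycount_single_y]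
      ring
    have hmove : moves m a (single (pair s t) 1 + single x1 1 + single xn 1 + r) := by
      conv_lhs => rw [← has, ← hat, ← add_assoc]
      exact (moves m).add (moves_y_y s t) ((moves m).refl r)
    obtain ⟨a', ha', hy⟩ := ih (ycount r) (by omega) _
      (by simp [ycount_add, ycount_single_of_ne, pair_ne_y] :
        ycount (single (pair s t) 1 + single x1 1 + single xn 1 + r) = ycount r)
    exact ⟨a', hmove.trans ha', hy⟩

lemma exists_moves_apply_y_ne_zero {b : DVar m →₀ ℕ} {i : Fin (m - 1)}
    (hi : mdeg b (2 * i.val + 3) ≠ 0) (hy : ycount b ≠ 0) :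
    ∃ b', moves m b b' ∧ b' (y i) ≠ 0 := by
  obtain ⟨t, ht⟩ := exists_apply_y_ne_zero hy
  obtain ⟨w, hw, hwi⟩ := exists_of_linearCombination_apply_pos exponent (Nat.pos_of_ne_zero hi)
  rcases eq_y_or_eq_pair_of_exponent_ne_zero hwi.ne' with rfl | ⟨o, rfl⟩
  · exact ⟨b, (moves m).refl b, hw⟩
  have hle := single_add_single_le (pair_ne_y i o t) hw ht
  exact ⟨_, (moves m).rel_add_tsub_of_le hle (moves_pair_y i o t), by simp⟩

lemma exists_moves_apply_pair_ne_zero {b : DVar m →₀ ℕ} {i k : Fin (m - 1)}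
    (h : exponent (pair i k) ≤ mdeg b) (hy : ycount b ≤ 1) :
    ∃ b', moves m b b' ∧ b' (pair i k) ≠ 0 := by
  rw [exponent_pair] at h
  rcases exists_of_single_add_single_le_linearCombination exponent h with
    ⟨w, hw, hle⟩ | ⟨w₁, w₂, hle, h₁, h₂⟩
  · rw [← exponent_pair] at hle
    exact ⟨b, (moves m).refl b, eq_pair_of_exponent_pair_le hle ▸ hw⟩
  rcases eq_y_or_eq_pair_of_exponent_ne_zero h₁.ne' with rfl | ⟨o, rfl⟩ <;>
    rcases eq_y_or_eq_pair_of_exponent_ne_zero h₂.ne' with rfl | ⟨o', rfl⟩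
  · have := ycount_mono hle
    simp only [ycount_add, ycount_single_y] at this
    omega
  · rw [add_comm, pair_comm] at hle
    have hmove := moves_pair_y o' k i
    exact ⟨_, (moves m).rel_add_tsub_of_le hle hmove, by simp⟩
  · rw [pair_comm] at hle
    have hmove := moves_pair_y o i k
    rw [pair_comm k i] at hmove
    exact ⟨_, (moves m).rel_add_tsub_of_le hle hmove, by simp⟩
  · exact ⟨_, (moves m).rel_add_tsub_of_le hle (moves_pair_pair i o k o'), by simp⟩

lemma exists_moves_apply_ne_zero {a b : DVar m →₀ ℕ} (hE : mdeg a = mdeg b) (ha : ycount a ≤ 1)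
    (hb : ycount b ≤ 1) {v : DVar m} (hv : a v ≠ 0) : ∃ b', moves m b b' ∧ b' v ≠ 0 := by
  have hvb := exponent_le_mdeg hv
  rw [hE] at hvb
  have h1 := congr($hE 1)
  rw [mdeg_apply_one, mdeg_apply_one] at h1
  cases v with
  | x1 => exact ⟨b, (moves m).refl b, by omega⟩
  | xn =>
    have hn := congr($hE (2 * m))
    rw [mdeg_apply_two_mul, mdeg_apply_two_mul] at hn
    exact ⟨b, (moves m).refl b, by omega⟩
  | xJc t => exact ⟨b, (moves m).refl b, by rwa [← mdeg_apply_even, ← hE, mdeg_apply_even]⟩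
  | xJ i =>
    rw [← pair_self] at hvb ⊢
    exact exists_moves_apply_pair_ne_zero hvb hb
  | xP i k hik =>
    rw [← pair_of_lt hik] at hvb ⊢
    exact exists_moves_apply_pair_ne_zero hvb hb
  | y i =>
    refine exists_moves_apply_y_ne_zero ?_ ?_
    · have := le_def.1 hvb (2 * i.val + 3)
      simp [exponent] at this
      omega
    · have := apply_y_le_ycount a i
      omega

lemma moves_of_mdeg_eq_of_ycount_le_one {a b : DVar m →₀ ℕ} (hE : mdeg a = mdeg b)
    (ha : ycount a ≤ 1) (hb : ycount b ≤ 1) : moves m a b := by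
  induction hn : a.degree generalizing a b with
  | zero =>
    obtain rfl := (degree_eq_zero_iff a).1 hn
    obtain rfl := eq_zero_of_mdeg_eq_zero (by rw [← hE, map_zero])
    exact (moves m).refl 0
  | succ n ih =>
    obtain ⟨v, hv⟩ : ∃ v, a v ≠ 0 := by
      by_contra! h
      rw [show a = 0 from Finsupp.ext h, map_zero] at hn
      exact n.succ_ne_zero hn.symm
    obtain ⟨b₁, hbb₁, hb₁⟩ := exists_moves_apply_ne_zero hE ha hb hv
    have ha₀ := single_one_add_tsub hv
    have hb₀ := single_one_add_tsub hb₁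
    obtain ⟨b₂, hb₂, hy₂⟩ := exists_moves_ycount_le_one (b₁ - single v 1)
    have hE₀ : mdeg (a - single v 1) = mdeg b₂ := by
      rw [← mdeg_eq_of_moves hb₂]
      apply add_left_cancel (a := mdeg (single v 1))
      rw [← map_add, ← map_add, ha₀, hb₀, hE, mdeg_eq_of_moves hbb₁]
    have hn₀ : (a - single v 1).degree = n := by
      have := congrArg degree ha₀
      rw [map_add, degree_single] at this
      omega
    have h₀ := ih hE₀ ((ycount_mono tsub_le_self).trans ha) hy₂ hn₀
    rw [← ha₀]
    refine ((moves m).add ((moves m).refl _) (h₀.trans hb₂.symm)).trans ?_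
    rw [hb₀]
    exact hbb₁.symm

theorem moves_of_mdeg_eq {a b : DVar m →₀ ℕ} (h : mdeg a = mdeg b) : moves m a b := by
  obtain ⟨a', ha, ha'⟩ := exists_moves_ycount_le_one a
  obtain ⟨b', hb, hb'⟩ := exists_moves_ycount_le_one b
  have hE : mdeg a' = mdeg b' := by rw [← mdeg_eq_of_moves ha, ← mdeg_eq_of_moves hb, h]
  exact ha.trans ((moves_of_mdeg_eq_of_ycount_le_one hE ha' hb').trans hb.symm)

theorem span_GD_eq_ker (K : Type*) [Field K] : Ideal.span (GD K m) = RingHom.ker (piD K m) := by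
  refine le_antisymm (Ideal.span_le.2 fun g hg => ?_) ?_
  · obtain ⟨A, B, h, rfl⟩ := mem_GD_iff.1 hg
    simp [RingHom.mem_ker, piD_monomial, h.mdeg_eq]
  · rw [piD_eq_aeval]
    exact ker_aeval_monomial_le _ fun a b h =>
      moves_le_binomialCon K (moves_of_mdeg_eq h)

def IsGenShape (e : DVar m →₀ ℕ) : Prop :=
  (e.degree = 2 ∧ e x1 = 0 ∧ e xn = 0) ∨ ∃ q, e = single q 1 + single x1 1 + single xn 1

lemma IsGenShape.eq_of_le {e A : DVar m →₀ ℕ} (he : IsGenShape e) (hA : IsGenShape A)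
    (h : e ≤ A) : e = A := by
  have hd := degree_mono h
  rcases he with ⟨he, he1, hen⟩ | ⟨q, rfl⟩ <;> rcases hA with ⟨hA, -, -⟩ | ⟨q', rfl⟩
  · exact eq_of_le_of_degree_le h (by omega)
  · refine absurd (degree_mono (show e ≤ single q' 1 from fun w => ?_)) (by simp [he])
    have hw := h w
    by_cases hw1 : w = x1
    · simp [hw1, he1]
    by_cases hwn : w = xn
    · simp [hwn, hen]
    simpa [Ne.symm hw1, Ne.symm hwn] using hw
  · simp at hd
    omega
  · exact eq_of_le_of_degree_le h (by simp)

lemma IsGen.isGenShape {A B : DVar m →₀ ℕ} (h : IsGen A B) : IsGenShape A ∧ IsGenShape B := by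
  cases h <;> refine ⟨?_, ?_⟩ <;>
    first
      | (refine Or.inl ⟨?_, ?_, ?_⟩ <;> simp; done)
      | exact Or.inr ⟨_, rfl⟩

lemma single_add_single_ne (u v q : DVar m) :
    single u 1 + single v 1 ≠ single q 1 + single x1 1 + single xn 1 := by
  intro h
  simpa using congrArg degree h

lemma IsGen.right_unique {A B A' B' : DVar m →₀ ℕ} (h : IsGen A B) (h' : IsGen A' B')
    (hA : A = A') : B = B' := by
  cases h <;> cases h' <;>
    simp [single_add_single_eq_single_add_single, single_left_inj one_ne_zero,
      single_add_single_ne, (single_add_single_ne _ _ _).symm] at hA ⊢ <;> omega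

lemma IsGen.left_ne_right {A B A' B' : DVar m →₀ ℕ} (h : IsGen A B) (h' : IsGen A' B') :
    A ≠ B' := by
  cases h <;> cases h' <;>
    simp [single_add_single_eq_single_add_single, (single_add_single_ne _ _ _).symm] <;> omega

lemma binomial_notMem_span {K : Type*} [Field K] {S : Set (MvPolynomial (DVar m) K)}
    (hS : S ⊆ GD K m) {A B : DVar m →₀ ℕ} (h : IsGen A B)
    (hAB : monomial A 1 - monomial B 1 ∉ S) : monomial A 1 - monomial B 1 ∉ Ideal.span S := by
  intro hspan
  have hdiv : ∀ s ∈ S, ∀ e ∈ s.support, ¬ e ≤ A := by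
    intro s hs e he hle
    obtain ⟨A', B', h', rfl⟩ := mem_GD_iff.1 (hS hs)
    rcases Finset.mem_union.1 (support_sub _ _ _ he) with he | he <;>
      obtain rfl := Finset.mem_singleton.1 (support_monomial_subset he)
    · obtain rfl := h'.isGenShape.1.eq_of_le h.isGenShape.1 hle
      exact hAB (h.right_unique h' rfl ▸ hs)
    · exact h.left_ne_right h' (h'.isGenShape.2.eq_of_le h.isGenShape.1 hle).symm
  have := coeff_eq_zero_of_mem_span hdiv hspan A le_rfl
  rw [coeff_sub, coeff_monomial, coeff_monomial, if_pos rfl, if_neg (h.left_ne_right h).symm,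
    sub_zero] at this
  exact one_ne_zero this

end DVar

end

theorem GD_minimal_generating_general (K : Type*) [Field K] (m : ℕ) :
    Ideal.span (GD K m) = RingHom.ker (piD K m) ∧
      ∀ S : Set (MvPolynomial (DVar m) K), S ⊂ GD K m →
        Ideal.span S ≠ RingHom.ker (piD K m) := by
  refine ⟨DVar.span_GD_eq_ker K, fun S hS hspan => ?_⟩
  obtain ⟨g, hg, hgS⟩ := Set.exists_of_ssubset hS
  obtain ⟨A, B, h, rfl⟩ := DVar.mem_GD_iff.1 hg
  refine DVar.binomial_notMem_span hS.subset h hgS ?_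
  rw [hspan, ← DVar.span_GD_eq_ker]
  exact Ideal.subset_span hg

/-- `𝒢_{D_{2m}}` is a minimal generating set of `I_{D_{2m}}`: it generates the
toric ideal, and no proper subset of it generates the toric ideal. -/
theorem GD_minimal_generating (K : Type*) [Field K] (m : ℕ) (hm : 2 ≤ m) :
    Ideal.span (GD K m) = RingHom.ker (piD K m) ∧
      ∀ S : Set (MvPolynomial (DVar m) K), S ⊂ GD K m →
        Ideal.span S ≠ RingHom.ker (piD K m) :=
  GD_minimal_generating_general K m
end
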